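/- arXiv:1406.3233 — 2 statements merged into one kernel-verified Lean document; each statement's English description precedes it below -/
import Mathlib

section
/- Let K be a field with an absolute value |·|_v, and f(X) = a_nXⁿ + … + a₀ ∈ K[X] a polynomial of degree n. Let β₁,…,β_{ℓ+1} be ℓ+1 distinct roots of f, where 0 ≤ ℓ ≤ n−1. Then max{|β₁|_v,…,|β_{ℓ+1}|_v} ≥ c_v(n)·|a_ℓ|_v / |f|_v, where c_v(n) = 1 if v is non-archimedean and c_v(n) = (n+1)⁻¹·2⁻ⁿ if v is archimedean, and |f|_v denotes the maximum of the v-adic absolute values of the coefficients of f. -/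
/-!
Write `f = g * q` with `g = ∏ (X - βᵢ)` and put `B = maxᵢ |βᵢ|`. Since `ℓ < deg g`, the
coefficient `a_ℓ = ∑_{i + j = ℓ} g_i q_j` only involves coefficients of `g` below the leading one;
these are elementary symmetric functions of positive degree in the `βᵢ`, hence `O(B)` once
`B ≤ 1`. It remains to bound the coefficients of `q` by `|f|`. In the non-archimedean case this
is Gauss's lemma, `|f| = |g| |q|` with `|g| ≥ 1` as `g` is monic. In the archimedean case, solving
`q_j = f_{j+1} + b q_{j+1}` downwards shows that dividing by one factor `X - b` with `|b| ≤ B < 1`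
costs at most a factor `(1 - B)⁻¹`, and `(1 - B)^(ℓ+1) ≥ 1/2` by Bernoulli as soon as `B` is below
the constant `c_v(n)`. If `B` is larger, the claim is trivial because `|a_ℓ| ≤ |f|`.
-/

open Polynomial

namespace Polynomial

theorem gaussNorm_one_eq_sup_toNNReal {R : Type*} [Semiring R] (v : AbsoluteValue R ℝ)
    (p : R[X]) :
    p.gaussNorm v 1 = ((p.support.sup fun k => (v (p.coeff k)).toNNReal : NNReal) : ℝ) := by
  rcases p.support.eq_empty_or_nonempty with h | h
  · simp [gaussNorm, h]
  · rw [gaussNorm, dif_pos h, ← Finset.sup'_eq_sup h,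
      Finset.apply_sup'_eq_sup'_comp h _ NNReal.coe_max]
    simp [Real.coe_toNNReal _ (v.nonneg _)]

theorem Monic.gaussNorm_le_gaussNorm_mul {R : Type*} [Ring R] [Nontrivial R]
    {v : AbsoluteValue R ℝ} (hna : IsNonarchimedean v) {g : R[X]} (hg : g.Monic) (q : R[X]) :
    q.gaussNorm v 1 ≤ (g * q).gaussNorm v 1 := by
  rw [gaussNorm_mul hna one_pos]
  refine le_mul_of_one_le_left (q.gaussNorm_nonneg v zero_le_one) ?_
  simpa [hg.coeff_natDegree] using g.le_gaussNorm v zero_le_one g.natDegree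

end Polynomial

theorem inv_succ_mul_inv_two_pow_mul_two_pow_succ_le_one {n : ℕ} (hn : 1 ≤ n) :
    ((n : ℝ) + 1)⁻¹ * 2⁻¹ ^ n * 2 ^ (n + 1) ≤ 1 := by
  have hn1 : (1 : ℝ) ≤ n := by exact_mod_cast hn
  rw [pow_succ, ← mul_assoc, mul_assoc _ (2⁻¹ ^ n), ← mul_pow, inv_mul_cancel₀ two_ne_zero,
    one_pow, mul_one, inv_mul_le_iff₀ (by positivity)]
  linarith

namespace AbsoluteValue

theorem apply_coeff_le_gaussNorm {R : Type*} [Semiring R] (v : AbsoluteValue R ℝ) (p : R[X])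
    (k : ℕ) : v (p.coeff k) ≤ p.gaussNorm v 1 := by
  simpa using p.le_gaussNorm v zero_le_one k

section CommRing

variable {R : Type*} [CommRing R] (v : AbsoluteValue R ℝ)

theorem nonneg_of_forall_mem_le {s : Multiset R} {B : ℝ} (hs : ∀ b ∈ s, v b ≤ B)
    (h : 0 < Multiset.card s) : 0 ≤ B := by
  obtain ⟨b, hb⟩ := Multiset.card_pos_iff_exists_mem.1 h
  exact (v.nonneg b).trans (hs b hb)

theorem apply_coeff_le_div_of_X_sub_C_mul {b : R} {B M : ℝ} (hb : v b ≤ B) (hB : B < 1)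
    {q : R[X]} (hM : ∀ k, v (((X - C b) * q).coeff k) ≤ M) (j : ℕ) :
    v (q.coeff j) ≤ M / (1 - B) := by
  have h1B : 0 < 1 - B := sub_pos.2 hB
  have hM0 : 0 ≤ M := (v.nonneg _).trans (hM 0)
  suffices ∀ i j, q.natDegree < j + i → v (q.coeff j) ≤ M / (1 - B) from
    this (q.natDegree + 1) j (by omega)
  intro i
  induction i with
  | zero =>
    intro j hj
    rw [coeff_eq_zero_of_natDegree_lt (by omega), v.map_zero]
    positivity
  | succ i ih =>
    intro j hj
    have hrec : q.coeff j = ((X - C b) * q).coeff (j + 1) + q.coeff (j + 1) * b := by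
      rw [mul_comm, coeff_mul_X_sub_C]; ring
    calc v (q.coeff j) ≤ M + M / (1 - B) * B := by
          rw [hrec]
          refine (v.add_le _ _).trans (add_le_add (hM _) ?_)
          rw [map_mul]
          exact mul_le_mul (ih _ (by omega)) hb (v.nonneg _) (by positivity)
      _ = M / (1 - B) := by field_simp; ring

theorem apply_coeff_le_div_pow_of_prod_X_sub_C_mul {s : Multiset R} {B M : ℝ}
    (hs : ∀ b ∈ s, v b ≤ B) (hB : B < 1) {q : R[X]}
    (hM : ∀ k, v (((s.map fun b => X - C b).prod * q).coeff k) ≤ M) (j : ℕ) :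
    v (q.coeff j) ≤ M / (1 - B) ^ Multiset.card s := by
  induction s using Multiset.induction_on generalizing M with
  | empty => simpa using hM j
  | cons a s ih =>
    have hM' : ∀ k, v (((s.map fun b => X - C b).prod * q).coeff k) ≤ M / (1 - B) :=
      v.apply_coeff_le_div_of_X_sub_C_mul (hs a (Multiset.mem_cons_self _ _)) hB
        (by simpa [mul_assoc] using hM)
    calc v (q.coeff j) ≤ M / (1 - B) / (1 - B) ^ Multiset.card s :=
          ih (fun b hb => hs b (Multiset.mem_cons_of_mem hb)) hM'
      _ = _ := by rw [Multiset.card_cons, pow_succ', div_div]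

theorem apply_coeff_le_two_mul_of_prod_X_sub_C_mul {s : Multiset R} {B M : ℝ}
    (hs : ∀ b ∈ s, v b ≤ B) (hB : B < 1) (hsB : Multiset.card s * B ≤ 1 / 2) {q : R[X]}
    (hM : ∀ k, v (((s.map fun b => X - C b).prod * q).coeff k) ≤ M) (j : ℕ) :
    v (q.coeff j) ≤ 2 * M := by
  have hM0 : 0 ≤ M := (v.nonneg _).trans (hM 0)
  have hpow : 1 / 2 ≤ (1 - B) ^ Multiset.card s := by
    have := one_add_mul_le_pow (a := -B) (by linarith) (Multiset.card s)
    rw [← sub_eq_add_neg] at this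
    linarith
  refine (v.apply_coeff_le_div_pow_of_prod_X_sub_C_mul hs hB hM j).trans ?_
  rw [div_le_iff₀ (by positivity)]
  nlinarith

end CommRing

variable {R : Type*} [CommRing R] [Nontrivial R] (v : AbsoluteValue R ℝ)

theorem apply_esymm_le {s : Multiset R} {B : ℝ} (hs : ∀ b ∈ s, v b ≤ B) (j : ℕ) :
    v (s.esymm j) ≤ (Multiset.card s).choose j * B ^ j := by
  have hprod : ∀ t ∈ s.powersetCard j, v t.prod ≤ B ^ j := by
    intro t ht
    obtain ⟨hts, rfl⟩ := Multiset.mem_powersetCard.1 ht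
    rw [map_multiset_prod]
    exact Multiset.prod_map_le_pow_card (fun _ _ => v.nonneg _)
      fun b hb => hs b (Multiset.mem_of_le hts hb)
  calc v (s.esymm j) ≤ (((s.powersetCard j).map Multiset.prod).map v).sum :=
        Multiset.le_sum_of_subadditive v v.map_zero.le v.add_le _
    _ ≤ _ := by
        refine (Multiset.sum_le_card_nsmul _ (B ^ j) fun x hx => ?_).trans_eq ?_
        · obtain ⟨t, ht, rfl⟩ := Multiset.mem_map.1 (Multiset.map_map v _ _ ▸ hx)
          exact hprod t ht
        · simp [Multiset.card_powersetCard, nsmul_eq_mul]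

theorem apply_esymm_le_of_isNonarchimedean (hna : IsNonarchimedean v) {s : Multiset R} {B : ℝ}
    (hB : 0 ≤ B) (hs : ∀ b ∈ s, v b ≤ B) (j : ℕ) : v (s.esymm j) ≤ B ^ j := by
  obtain ⟨t, ht, hle⟩ := hna.multiset_image_add Multiset.prod (s.powersetCard j)
  rcases eq_or_ne (s.powersetCard j) 0 with h0 | hne
  · simp [Multiset.esymm, h0, pow_nonneg hB]
  obtain ⟨hts, rfl⟩ := Multiset.mem_powersetCard.1 (ht hne)
  refine hle.trans ?_
  rw [map_multiset_prod]
  exact Multiset.prod_map_le_pow_card (fun _ _ => v.nonneg _)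
    fun b hb => hs b (Multiset.mem_of_le hts hb)

theorem apply_coeff_prod_X_sub_C {s : Multiset R} {i : ℕ} (hi : i ≤ Multiset.card s) :
    v ((s.map fun b => X - C b).prod.coeff i) = v (s.esymm (Multiset.card s - i)) := by
  rw [Multiset.prod_X_sub_C_coeff s hi, map_mul, map_pow, v.map_neg, v.map_one, one_pow, one_mul]

theorem apply_coeff_prod_X_sub_C_le {s : Multiset R} {B : ℝ} (hs : ∀ b ∈ s, v b ≤ B)
    (hB : B ≤ 1) {i : ℕ} (hi : i < Multiset.card s) :
    v ((s.map fun b => X - C b).prod.coeff i) ≤ (Multiset.card s).choose i * B := by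
  have hB0 : 0 ≤ B := v.nonneg_of_forall_mem_le hs (by omega)
  rw [v.apply_coeff_prod_X_sub_C hi.le, ← Nat.choose_symm hi.le]
  exact (v.apply_esymm_le hs _).trans
    (by gcongr; exact pow_le_of_le_one hB0 hB (Nat.sub_ne_zero_of_lt hi))

theorem apply_coeff_prod_X_sub_C_le_of_isNonarchimedean (hna : IsNonarchimedean v)
    {s : Multiset R} {B : ℝ} (hs : ∀ b ∈ s, v b ≤ B) (hB : B ≤ 1) {i : ℕ}
    (hi : i < Multiset.card s) : v ((s.map fun b => X - C b).prod.coeff i) ≤ B := by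
  have hB0 : 0 ≤ B := v.nonneg_of_forall_mem_le hs (by omega)
  rw [v.apply_coeff_prod_X_sub_C hi.le]
  exact (v.apply_esymm_le_of_isNonarchimedean hna hB0 hs _).trans
    (pow_le_of_le_one hB0 hB (Nat.sub_ne_zero_of_lt hi))

theorem apply_coeff_prod_X_sub_C_mul_le {s : Multiset R} {B Q : ℝ} (hs : ∀ b ∈ s, v b ≤ B)
    (hB : B ≤ 1) {q : R[X]} (hq : ∀ j, v (q.coeff j) ≤ Q) {ℓ : ℕ} (hℓ : ℓ < Multiset.card s) :
    v (((s.map fun b => X - C b).prod * q).coeff ℓ) ≤ 2 ^ Multiset.card s * B * Q := by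
  set m := Multiset.card s
  have hB0 : 0 ≤ B := v.nonneg_of_forall_mem_le hs (by omega)
  have hQ0 : 0 ≤ Q := (v.nonneg _).trans (hq 0)
  have hchoose : ∑ i ∈ Finset.range (ℓ + 1), (m.choose i : ℝ) ≤ 2 ^ m := by
    exact_mod_cast (Finset.sum_le_sum_of_subset
      (Finset.range_subset_range.2 (by omega : ℓ + 1 ≤ m + 1))).trans_eq (Nat.sum_range_choose m)
  rw [coeff_mul, Finset.Nat.sum_antidiagonal_eq_sum_range_succ_mk]
  calc _ ≤ ∑ i ∈ Finset.range (ℓ + 1), m.choose i * B * Q := by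
        refine (v.sum_le _ _).trans (Finset.sum_le_sum fun i hi => ?_)
        rw [map_mul]
        have hi : i < m := (Finset.mem_range.1 hi).trans_le hℓ
        exact mul_le_mul (v.apply_coeff_prod_X_sub_C_le hs hB hi) (hq _) (v.nonneg _)
          (by positivity)
    _ = (∑ i ∈ Finset.range (ℓ + 1), (m.choose i : ℝ)) * B * Q := by
        rw [Finset.sum_mul, Finset.sum_mul]
    _ ≤ 2 ^ m * B * Q := by gcongr

theorem apply_coeff_prod_X_sub_C_mul_le_of_isNonarchimedean (hna : IsNonarchimedean v)
    {s : Multiset R} {B Q : ℝ} (hs : ∀ b ∈ s, v b ≤ B) (hB : B ≤ 1) {q : R[X]}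
    (hq : ∀ j, v (q.coeff j) ≤ Q) {ℓ : ℕ} (hℓ : ℓ < Multiset.card s) :
    v (((s.map fun b => X - C b).prod * q).coeff ℓ) ≤ B * Q := by
  rw [coeff_mul]
  obtain ⟨x, hx, hle⟩ := hna.finset_image_add_of_nonempty
    (fun x => (s.map fun b => X - C b).prod.coeff x.1 * q.coeff x.2)
    ⟨(0, ℓ), Finset.HasAntidiagonal.mem_antidiagonal.2 (zero_add ℓ)⟩
  refine hle.trans ?_
  rw [map_mul]
  have hx : x.1 < Multiset.card s := by
    have := Finset.HasAntidiagonal.mem_antidiagonal.1 hx; omega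
  exact mul_le_mul (v.apply_coeff_prod_X_sub_C_le_of_isNonarchimedean hna hs hB hx) (hq _)
    (v.nonneg _) (v.nonneg_of_forall_mem_le hs (by omega))

theorem apply_coeff_le_mul_gaussNorm_of_isNonarchimedean (hna : IsNonarchimedean v)
    {s : Multiset R} {B : ℝ} (hs : ∀ b ∈ s, v b ≤ B) {f : R[X]}
    (hdvd : (s.map fun b => X - C b).prod ∣ f) {ℓ : ℕ} (hℓ : ℓ < Multiset.card s) :
    v (f.coeff ℓ) ≤ B * f.gaussNorm v 1 := by
  rcases le_or_gt 1 B with hB | hB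
  · exact (v.apply_coeff_le_gaussNorm f ℓ).trans
      (le_mul_of_one_le_left (f.gaussNorm_nonneg v zero_le_one) hB)
  have hB0 : 0 ≤ B := v.nonneg_of_forall_mem_le hs (by omega)
  obtain ⟨q, rfl⟩ := hdvd
  have hg : (s.map fun b => X - C b).prod.Monic :=
    monic_multiset_prod_of_monic _ _ fun b _ => monic_X_sub_C b
  calc _ ≤ B * q.gaussNorm v 1 := v.apply_coeff_prod_X_sub_C_mul_le_of_isNonarchimedean hna hs
          hB.le (v.apply_coeff_le_gaussNorm q) hℓ
    _ ≤ _ := by gcongr; exact Monic.gaussNorm_le_gaussNorm_mul hna hg q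

theorem inv_mul_apply_coeff_le_mul_gaussNorm {s : Multiset R} {B : ℝ} (hs : ∀ b ∈ s, v b ≤ B)
    {f : R[X]} (hdvd : (s.map fun b => X - C b).prod ∣ f) {ℓ n : ℕ}
    (hℓ : ℓ < Multiset.card s) (hn : Multiset.card s ≤ n) :
    ((n : ℝ) + 1)⁻¹ * 2⁻¹ ^ n * v (f.coeff ℓ) ≤ B * f.gaussNorm v 1 := by
  set m := Multiset.card s
  set ε : ℝ := ((n : ℝ) + 1)⁻¹ * 2⁻¹ ^ n
  set M := f.gaussNorm v 1
  have hM0 : 0 ≤ M := f.gaussNorm_nonneg v zero_le_one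
  have hε : ε * 2 ^ (n + 1) ≤ 1 := inv_succ_mul_inv_two_pow_mul_two_pow_succ_le_one (by omega)
  rcases le_or_gt ε B with hεB | hBε
  · calc ε * v (f.coeff ℓ) ≤ ε * M := by gcongr; exact v.apply_coeff_le_gaussNorm f ℓ
      _ ≤ B * M := by gcongr
  have hB0 : 0 ≤ B := v.nonneg_of_forall_mem_le hs (by omega)
  have hmB : m * B ≤ 1 / 2 := by
    calc m * B ≤ 2 ^ n * ε := by gcongr; exact_mod_cast hn.trans n.lt_two_pow_self.le
      _ = ε * 2 ^ (n + 1) / 2 := by ring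
      _ ≤ 1 / 2 := by gcongr
  have hB1 : B < 1 := by
    have hm1 : (1 : ℝ) ≤ m := by exact_mod_cast (by omega : 1 ≤ m)
    nlinarith
  obtain ⟨q, rfl⟩ := hdvd
  have hq : ∀ j, v (q.coeff j) ≤ 2 * M :=
    v.apply_coeff_le_two_mul_of_prod_X_sub_C_mul hs hB1 hmB (v.apply_coeff_le_gaussNorm _)
  calc ε * v _ ≤ ε * (2 ^ m * B * (2 * M)) := by
        gcongr; exact v.apply_coeff_prod_X_sub_C_mul_le hs hB1.le hq hℓ
    _ = ε * 2 ^ (m + 1) * (B * M) := by ring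
    _ ≤ ε * 2 ^ (n + 1) * (B * M) := by gcongr; norm_num
    _ ≤ B * M := mul_le_of_le_one_left (by positivity) hε

end AbsoluteValue

theorem max_abs_roots_ge_general {K : Type*} [Field K] (v : AbsoluteValue K ℝ)
    (f : Polynomial K) (hf : f ≠ 0) (n ℓ : ℕ) (hℓ : ℓ < n)
    (β : Fin (ℓ + 1) → K) (hinj : Function.Injective β)
    (hroots : ∀ i, f.eval (β i) = 0)
    (fnorm : ℝ)
    (hfnorm : fnorm = ((f.support.sup fun k => (v (f.coeff k)).toNNReal : NNReal) : ℝ)) :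
    (IsNonarchimedean (fun x => v x) →
      1 * (v (f.coeff ℓ) / fnorm) ≤ Finset.univ.sup' Finset.univ_nonempty fun i => v (β i)) ∧
    (¬ IsNonarchimedean (fun x => v x) →
      ((n : ℝ) + 1)⁻¹ * (2 : ℝ)⁻¹ ^ n * (v (f.coeff ℓ) / fnorm) ≤
        Finset.univ.sup' Finset.univ_nonempty fun i => v (β i)) := by
  set s : Multiset K := Finset.univ.val.map β
  have hs : ∀ b ∈ s, v b ≤ Finset.univ.sup' Finset.univ_nonempty fun i => v (β i) := by
    simp only [s, Multiset.mem_map]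
    rintro _ ⟨i, -, rfl⟩
    exact Finset.le_sup' (fun i => v (β i)) (Finset.mem_univ i)
  have hcard : Multiset.card s = ℓ + 1 := by simp [s]
  have hdvd : (s.map fun b => X - C b).prod ∣ f := by
    refine (Multiset.prod_X_sub_C_dvd_iff_le_roots hf s).2
      ((Multiset.le_iff_subset (Finset.univ.nodup.map hinj)).2 ?_)
    simp [Multiset.subset_iff, hf, hroots]
  rw [← gaussNorm_one_eq_sup_toNNReal] at hfnorm
  have hpos : 0 < fnorm := hfnorm ▸
    (v.pos (leadingCoeff_ne_zero.2 hf)).trans_le (v.apply_coeff_le_gaussNorm f f.natDegree)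
  refine ⟨fun hna => ?_, fun _ => ?_⟩
  · rw [one_mul, div_le_iff₀ hpos, hfnorm]
    exact v.apply_coeff_le_mul_gaussNorm_of_isNonarchimedean hna hs hdvd (by omega)
  · rw [← mul_div_assoc, div_le_iff₀ hpos, hfnorm]
    exact v.inv_mul_apply_coeff_le_mul_gaussNorm hs hdvd (by omega) (by omega)

/-- Let `K` be a field with an absolute value `v`, and
`f(X) = a_n Xⁿ + … + a₀ ∈ K[X]` of degree `n`. Let `β₁,…,β_{ℓ+1}` be `ℓ+1` distinct roots
of `f`, `0 ≤ ℓ ≤ n−1`. Then `max_i |β_i|_v ≥ c_v(n)·|a_ℓ|_v / |f|_v`, where `c_v(n) = 1`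
for non-archimedean `v` and `c_v(n) = (n+1)⁻¹·2⁻ⁿ` for archimedean `v`, and `|f|_v` is the
maximum of the absolute values of the coefficients of `f`. -/
theorem max_abs_roots_ge {K : Type*} [Field K] (v : AbsoluteValue K ℝ)
    (f : Polynomial K) (hf : f ≠ 0) (n ℓ : ℕ) (hn : f.natDegree = n) (hℓ : ℓ < n)
    (β : Fin (ℓ + 1) → K) (hinj : Function.Injective β)
    (hroots : ∀ i, f.eval (β i) = 0)
    (fnorm : ℝ)
    (hfnorm : fnorm = ((f.support.sup fun k => (v (f.coeff k)).toNNReal : NNReal) : ℝ)) :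
    (IsNonarchimedean (fun x => v x) →
      1 * (v (f.coeff ℓ) / fnorm) ≤ Finset.univ.sup' Finset.univ_nonempty fun i => v (β i)) ∧
    (¬ IsNonarchimedean (fun x => v x) →
      ((n : ℝ) + 1)⁻¹ * (2 : ℝ)⁻¹ ^ n * (v (f.coeff ℓ) / fnorm) ≤
        Finset.univ.sup' Finset.univ_nonempty fun i => v (β i)) :=
  max_abs_roots_ge_general v f hf n ℓ hℓ β hinj hroots fnorm hfnorm
end

section
/- Let K be a field of characteristic 0 and F(X,Y) = f_n(X)Yⁿ + … + f₀(X) ∈ K[X,Y] with deg_Y F = n and F(0,Y) not identically zero. Factor F(x,Y) = f_n(x)·(Y−y₁)⋯(Y−y_n) with Puiseux series y_i = Σ_{k≥κ_i} a_{ik}·x^{k/e_i}, a_{i,κ_i} ≠ 0. Then the order of vanishing r of F at (0,0), defined as the minimal i+j with ∂^{i+j}F/∂X^i∂Y^j(0,0) ≠ 0, satisfies r = Σ_{i : κ_i > 0} min{1, κ_i/e_i}. -/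
/-!
Write `|z| = e^{-ord z}` for the `x`-adic absolute value on `L[[x^ℚ]]`. For a polynomial
`P = Σ pⱼ Yʲ` over `L[[x^ℚ]]`, the Gauss norm with weight `e^{-w}` is `max_j |pⱼ| e^{-wj}`, i.e.
`e^{-ν}` where `ν = min_j (ord pⱼ + w j)`; it is multiplicative (Gauss's lemma). For
`P = F(x,Y)` it equals `e^{-μ_w}`, where `μ_w` is the least weighted degree `i + w j` of a monomial
`XⁱYʲ` of `F`. Hence `μ₀ = 0` since `F(0,Y) ≠ 0`, and `μ₁ = r`. Evaluating the Gauss norms on the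
factorisation `F(x,Y) = f_n(x) ∏ (Y - yᵢ)` instead gives `μ_w = ord f_n + Σ min(ord yᵢ, w)`, and
subtracting the cases `w = 0` and `w = 1` yields `r = Σ (min(ord yᵢ, 1) - min(ord yᵢ, 0))`.
-/

open Polynomial

/-- The map sending the variable `X` to the Hahn series `x` and `Y` to the polynomial
variable, turning `F(X,Y)` into `F(x,Y) ∈ L[[x^ℚ]][Y]`. -/
noncomputable def toHahnPoly {K L : Type*} [Field K] [Field L] [Algebra K L]
    (F : MvPolynomial (Fin 2) K) : Polynomial (HahnSeries ℚ L) :=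
  MvPolynomial.aeval ![Polynomial.C (HahnSeries.single (1 : ℚ) (1 : L)), Polynomial.X] F

namespace Polynomial

lemma gaussNorm_le_of_forall {R F : Type*} [Semiring R] [FunLike F R ℝ] [ZeroHomClass F R ℝ]
    {v : F} {c B : ℝ} {p : R[X]} (h : ∀ i, v (p.coeff i) * c ^ i ≤ B) : p.gaussNorm v c ≤ B := by
  obtain ⟨i, hi⟩ := p.exists_eq_gaussNorm v c
  exact hi ▸ h i

lemma gaussNorm_X_sub_C {R : Type*} [Ring R] [Nontrivial R] {v : AbsoluteValue R ℝ} {c : ℝ}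
    (hc : 0 ≤ c) (a : R) : (X - C a).gaussNorm v c = max (v a) c := by
  refine le_antisymm (gaussNorm_le_of_forall fun i => ?_) (max_le ?_ ?_)
  · rcases i with _ | _ | i <;> simp [coeff_X, coeff_C]
  · have := (X - C a).le_gaussNorm v hc 0
    simpa using this
  · have := (X - C a).le_gaussNorm v hc 1
    simpa using this

section CommRing

variable {R : Type*} [CommRing R] [Nontrivial R] {v : AbsoluteValue R ℝ} {c : ℝ}
  (hna : IsNonarchimedean v) (hc : 0 < c)
include hna hc

lemma gaussNorm_prod {ι : Type*} (s : Finset ι) (p : ι → R[X]) :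
    (∏ i ∈ s, p i).gaussNorm v c = ∏ i ∈ s, (p i).gaussNorm v c := by
  induction s using Finset.cons_induction with
  | empty => simpa using gaussNorm_C v c (1 : R)
  | cons i s hi ih => rw [Finset.prod_cons, Finset.prod_cons, gaussNorm_mul hna hc, ih]

lemma gaussNorm_C_mul_prod_X_sub_C {ι : Type*} (s : Finset ι) (a : R) (y : ι → R) :
    (C a * ∏ i ∈ s, (X - C (y i))).gaussNorm v c = v a * ∏ i ∈ s, max (v (y i)) c := by
  rw [gaussNorm_mul hna hc, gaussNorm_C, gaussNorm_prod hna hc]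
  simp only [gaussNorm_X_sub_C hc.le]

end CommRing

end Polynomial

namespace HahnSeries

variable {R : Type*} [Semiring R]

open Classical in
noncomputable def expNegOrder (z : HahnSeries ℚ R) : ℝ :=
  if z = 0 then 0 else Real.exp (-z.order)

lemma isNonarchimedean_expNegOrder : IsNonarchimedean (expNegOrder (R := R)) := by
  intro a b
  by_cases ha : a = 0
  · simp [ha]
  by_cases hb : b = 0
  · simp [hb]
  by_cases hab : a + b = 0
  · simp only [expNegOrder, hab, if_true]
    positivity
  simp only [expNegOrder, ha, hb, hab, if_false, ← Real.exp_monotone.map_max, max_neg_neg]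
  gcongr
  rw [← Rat.cast_min]
  exact_mod_cast min_order_le_order_add hab

variable [NoZeroDivisors R]

noncomputable def orderAbv : AbsoluteValue (HahnSeries ℚ R) ℝ where
  toFun := expNegOrder
  map_mul' a b := by
    by_cases ha : a = 0
    · simp [expNegOrder, ha]
    by_cases hb : b = 0
    · simp [expNegOrder, hb]
    simp [expNegOrder, ha, hb, ← Real.exp_add, add_comm]
  nonneg' z := by unfold expNegOrder; positivity
  eq_zero' z := by simp [expNegOrder, Real.exp_ne_zero]
  add_le' a b := (isNonarchimedean_expNegOrder a b).trans <| max_le_add_of_nonneg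
    (by unfold expNegOrder; positivity) (by unfold expNegOrder; positivity)

lemma orderAbv_of_ne {z : HahnSeries ℚ R} (hz : z ≠ 0) : orderAbv z = Real.exp (-z.order) := by
  simp [orderAbv, expNegOrder, hz]

lemma isNonarchimedean_orderAbv : IsNonarchimedean (orderAbv (R := R)) :=
  isNonarchimedean_expNegOrder

lemma exp_neg_le_orderAbv {z : HahnSeries ℚ R} {q : ℚ} (h : z.coeff q ≠ 0) :
    Real.exp (-q) ≤ orderAbv z := by
  rw [orderAbv_of_ne (ne_zero_of_coeff_ne_zero h)]
  gcongr
  exact_mod_cast order_le_of_coeff_ne_zero h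

lemma max_orderAbv_exp_neg {z : HahnSeries ℚ R} (hz : z ≠ 0) (w : ℚ) :
    max (orderAbv z) (Real.exp (-w)) = Real.exp (-(min z.order w : ℚ)) := by
  rw [orderAbv_of_ne hz, ← Real.exp_monotone.map_max, max_neg_neg, Rat.cast_min]

end HahnSeries

lemma gaussNorm_orderAbv_C_mul_prod_X_sub_C {R ι : Type*} [CommRing R] [IsDomain R]
    (s : Finset ι) {a : HahnSeries ℚ R} (ha : a ≠ 0) {y : ι → HahnSeries ℚ R}
    (hy : ∀ i ∈ s, y i ≠ 0) (w : ℚ) :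
    (C a * ∏ i ∈ s, (X - C (y i))).gaussNorm HahnSeries.orderAbv (Real.exp (-w)) =
      Real.exp (-(a.order + ∑ i ∈ s, min (y i).order w : ℚ)) := by
  rw [gaussNorm_C_mul_prod_X_sub_C HahnSeries.isNonarchimedean_orderAbv (Real.exp_pos _),
    Finset.prod_congr rfl fun i hi => HahnSeries.max_orderAbv_exp_neg (hy i hi) w,
    ← Real.exp_sum, HahnSeries.orderAbv_of_ne ha, ← Real.exp_add]
  push_cast
  rw [Finset.sum_neg_distrib, neg_add]

namespace MvPolynomial

variable {σ R : Type*} [CommSemiring R]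

lemma coeff_iterate_pderiv (i : σ) (k : ℕ) (p : MvPolynomial σ R) (m : σ →₀ ℕ) :
    coeff m ((pderiv i)^[k] p) =
      coeff (m + Finsupp.single i k) p * ((m i + k).descFactorial k : R) := by
  induction k generalizing p with
  | zero => simp
  | succ k ih =>
    rw [Function.iterate_succ_apply, ih, coeff_pderiv, add_assoc, ← Finsupp.single_add,
      ← add_assoc (m i), Nat.succ_descFactorial_succ]
    simp only [Finsupp.add_apply, Finsupp.single_eq_same]
    push_cast
    ring

lemma eval_zero_iterate_pderiv_iterate_pderiv {a b : σ} (hab : a ≠ b) (i j : ℕ)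
    (p : MvPolynomial σ R) :
    eval 0 ((pderiv a)^[i] ((pderiv b)^[j] p)) =
      coeff (Finsupp.single a i + Finsupp.single b j) p * (i.factorial * j.factorial : R) := by
  rw [eval_zero, constantCoeff_eq, coeff_iterate_pderiv, coeff_iterate_pderiv]
  simp [hab, Nat.descFactorial_self]
  ring

lemma eval_zero_iterate_pderiv_iterate_pderiv_ne_zero_iff [CharZero R] [NoZeroDivisors R]
    {a b : σ} (hab : a ≠ b) (i j : ℕ) (p : MvPolynomial σ R) :
    eval 0 ((pderiv a)^[i] ((pderiv b)^[j] p)) ≠ 0 ↔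
      Finsupp.single a i + Finsupp.single b j ∈ p.support := by
  rw [eval_zero_iterate_pderiv_iterate_pderiv hab, mem_support_iff]
  simp [Nat.factorial_ne_zero]

lemma exists_mem_support_eq_zero_of_aeval_ne_zero {S : Type*} [Fintype σ] [CommSemiring S]
    [Algebra R S] {F : MvPolynomial σ R} {x : σ → S} {i : σ} (hx : x i = 0)
    (h : aeval x F ≠ 0) : ∃ d ∈ F.support, d i = 0 := by
  contrapose! h
  rw [aeval_def, eval₂_eq']
  exact Finset.sum_eq_zero fun d hd =>
    mul_eq_zero_of_right _ (Finset.prod_eq_zero (Finset.mem_univ i) (by simp [hx, h d hd]))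

end MvPolynomial

section HahnPoly

variable {K L : Type*} [Field K] [Field L] [Algebra K L]

lemma coeff_coeff_toHahnPoly (F : MvPolynomial (Fin 2) K) (j : ℕ) (q : ℚ) :
    ((toHahnPoly (L := L) F).coeff j).coeff q =
      ∑ d ∈ F.support with d 1 = j ∧ (d 0 : ℚ) = q, algebraMap K L (F.coeff d) := by
  rw [toHahnPoly, MvPolynomial.aeval_def, MvPolynomial.eval₂_eq', Finset.sum_filter,
    finsetSum_coeff, HahnSeries.coeff_sum]
  refine Finset.sum_congr rfl fun d _ => ?_
  by_cases hj : d 1 = j <;> by_cases hq : (d 0 : ℚ) = q <;>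
    simp [hj, hq, Fin.prod_univ_two, ← C_pow, coeff_X_pow, HahnSeries.single_pow,
      HahnSeries.algebraMap_apply', PowerSeries.algebraMap_apply, HahnSeries.C_apply,
      HahnSeries.single_mul_single, eq_comm (a := j), eq_comm (a := q)]

lemma exists_mem_support_of_coeff_coeff_toHahnPoly_ne_zero {F : MvPolynomial (Fin 2) K} {j : ℕ}
    {q : ℚ} (h : ((toHahnPoly (L := L) F).coeff j).coeff q ≠ 0) :
    ∃ d ∈ F.support, d 1 = j ∧ (d 0 : ℚ) = q := by
  rw [coeff_coeff_toHahnPoly] at h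
  obtain ⟨d, hd, -⟩ := Finset.exists_ne_zero_of_sum_ne_zero h
  exact ⟨d, (Finset.mem_filter.1 hd).1, (Finset.mem_filter.1 hd).2⟩

lemma coeff_coeff_toHahnPoly_ne_zero {F : MvPolynomial (Fin 2) K} {d : Fin 2 →₀ ℕ}
    (hd : d ∈ F.support) : ((toHahnPoly (L := L) F).coeff (d 1)).coeff (d 0 : ℚ) ≠ 0 := by
  rw [coeff_coeff_toHahnPoly, Finset.sum_eq_single_of_mem d (by simp [hd])]
  · simpa using hd
  · intro d' hd' hne
    simp only [Finset.mem_filter, Nat.cast_inj] at hd'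
    exact absurd (Finsupp.ext (Fin.forall_fin_two.2 ⟨hd'.2.2, hd'.2.1⟩)) hne

lemma gaussNorm_orderAbv_toHahnPoly (F : MvPolynomial (Fin 2) K) (w m : ℚ) {d₀ : Fin 2 →₀ ℕ}
    (hd₀ : d₀ ∈ F.support) (hd₀m : d₀ 0 + w * d₀ 1 = m)
    (hmin : ∀ d ∈ F.support, m ≤ d 0 + w * d 1) :
    (toHahnPoly (L := L) F).gaussNorm HahnSeries.orderAbv (Real.exp (-w)) = Real.exp (-m) := by
  have hexp (d : Fin 2 →₀ ℕ) :
      Real.exp (-(d 0 : ℚ)) * Real.exp (-w) ^ d 1 = Real.exp (-(d 0 + w * d 1 : ℚ)) := by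
    rw [← Real.exp_nat_mul, ← Real.exp_add]
    push_cast
    ring_nf
  refine le_antisymm (gaussNorm_le_of_forall fun j => ?_) ?_
  · by_cases hj : (toHahnPoly (L := L) F).coeff j = 0
    · simp only [hj, map_zero, zero_mul]
      positivity
    obtain ⟨d, hd, rfl, hd0⟩ :=
      exists_mem_support_of_coeff_coeff_toHahnPoly_ne_zero (mt HahnSeries.coeff_order_eq_zero.1 hj)
    rw [HahnSeries.orderAbv_of_ne hj, ← hd0, hexp]
    gcongr
    exact hmin d hd
  · rw [← hd₀m, ← hexp]
    refine le_trans ?_ ((toHahnPoly F).le_gaussNorm _ (Real.exp_pos _).le (d₀ 1))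
    gcongr
    exact HahnSeries.exp_neg_le_orderAbv (coeff_coeff_toHahnPoly_ne_zero hd₀)

end HahnPoly

lemma min_div_one_sub_min_div_zero (κ : ℤ) (e : ℕ) :
    min ((κ : ℚ) / e) 1 - min ((κ : ℚ) / e) 0 = if 0 < κ then min 1 ((κ : ℚ) / e) else 0 := by
  split_ifs with hκ
  · have : 0 ≤ (κ : ℚ) / e := div_nonneg (by exact_mod_cast hκ.le) e.cast_nonneg
    rw [min_eq_right this, min_comm, sub_zero]
  · have : (κ : ℚ) / e ≤ 0 :=
      div_nonpos_of_nonpos_of_nonneg (by exact_mod_cast not_lt.1 hκ) e.cast_nonneg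
    rw [min_eq_left this, min_eq_left (this.trans zero_le_one), sub_self]

theorem order_of_vanishing_eq_sum_general {K L : Type*} [Field K] [CharZero K] [Field L] [Algebra K L]
    (F : MvPolynomial (Fin 2) K) (n : ℕ)
    (hF0 : MvPolynomial.aeval ![(0 : Polynomial K), Polynomial.X] F ≠ 0)
    (y : Fin n → HahnSeries ℚ L) (hy : ∀ i, y i ≠ 0)
    (e : Fin n → ℕ) (κ : Fin n → ℤ)
    (horder : ∀ i, (y i).order = (κ i : ℚ) / (e i : ℚ))
    (hfact : toHahnPoly (L := L) F =
      Polynomial.C (toHahnPoly (L := L) F).leadingCoeff *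
        ∏ i, (Polynomial.X - Polynomial.C (y i)))
    (r : ℕ)
    (hr₁ : ∃ i j : ℕ, i + j = r ∧
      MvPolynomial.eval (0 : Fin 2 → K)
        ((fun P => MvPolynomial.pderiv (0 : Fin 2) P)^[i]
          ((fun P => MvPolynomial.pderiv (1 : Fin 2) P)^[j] F)) ≠ 0)
    (hr₂ : ∀ i j : ℕ, i + j < r →
      MvPolynomial.eval (0 : Fin 2 → K)
        ((fun P => MvPolynomial.pderiv (0 : Fin 2) P)^[i]
          ((fun P => MvPolynomial.pderiv (1 : Fin 2) P)^[j] F)) = 0) :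
    (r : ℚ) = ∑ i ∈ Finset.univ.filter (fun i => 0 < κ i),
      min 1 ((κ i : ℚ) / (e i : ℚ)) := by
  have hderiv := MvPolynomial.eval_zero_iterate_pderiv_iterate_pderiv_ne_zero_iff
    (zero_ne_one : (0 : Fin 2) ≠ 1) (p := F)
  obtain ⟨i₀, j₀, rfl, h₀⟩ := hr₁
  have hmin (d) (hd : d ∈ F.support) : ((i₀ + j₀ : ℕ) : ℚ) ≤ d 0 + 1 * d 1 := by
    have hd' : Finsupp.single 0 (d 0) + Finsupp.single 1 (d 1) ∈ F.support := by
      convert hd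
      ext k; fin_cases k <;> simp
    rw [one_mul]
    exact_mod_cast not_lt.1 fun hlt => (hderiv _ _).2 hd' (hr₂ _ _ hlt)
  obtain ⟨d₁, hd₁, hd₁0⟩ :=
    MvPolynomial.exists_mem_support_eq_zero_of_aeval_ne_zero (i := 0) rfl hF0
  have h0 := gaussNorm_orderAbv_toHahnPoly (L := L) F 0 0 hd₁ (by simp [hd₁0])
    fun d _ => by positivity
  have h1 := gaussNorm_orderAbv_toHahnPoly (L := L) F 1 _ ((hderiv i₀ j₀).1 h₀) (by simp) hmin
  have hlc : (toHahnPoly (L := L) F).leadingCoeff ≠ 0 := by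
    refine leadingCoeff_ne_zero.2 fun hP => ?_
    simp only [hP, gaussNorm_zero] at h0
    exact (Real.exp_pos _).ne h0
  rw [hfact, gaussNorm_orderAbv_C_mul_prod_X_sub_C _ hlc (fun i _ => hy i)] at h0 h1
  replace h0 := Rat.cast_injective (neg_injective (Real.exp_injective h0))
  replace h1 := Rat.cast_injective (neg_injective (Real.exp_injective h1))
  simp only [horder] at h0 h1
  calc ((i₀ + j₀ : ℕ) : ℚ) = ∑ i, (min ((κ i : ℚ) / e i) 1 - min ((κ i : ℚ) / e i) 0) := by
        rw [Finset.sum_sub_distrib]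
        linarith
    _ = _ := by
        rw [Finset.sum_filter]
        exact Finset.sum_congr rfl fun i _ => min_div_one_sub_min_div_zero _ _

/-- Let `K` be a field of characteristic `0` and
`F(X,Y) = f_n(X)Yⁿ + … + f₀(X)` with `deg_Y F = n` and `F(0,Y) ≢ 0`. Factor
`F(x,Y) = f_n(x)(Y−y₁)⋯(Y−y_n)` with Puiseux series `y_i` of order `κ_i/e_i`
(`a_{i,κ_i} ≠ 0`). Then the order of vanishing `r` of `F` at `(0,0)` (the minimal `i+j`
with `∂^{i+j}F/∂Xⁱ∂Yʲ(0,0) ≠ 0`) satisfies `r = ∑_{i : κ_i > 0} min {1, κ_i/e_i}`. -/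
theorem order_of_vanishing_eq_sum {K L : Type*} [Field K] [CharZero K] [Field L] [Algebra K L]
    (F : MvPolynomial (Fin 2) K) (n : ℕ) (hn : n = F.degreeOf 1)
    (hF0 : MvPolynomial.aeval ![(0 : Polynomial K), Polynomial.X] F ≠ 0)
    (y : Fin n → HahnSeries ℚ L) (hy : ∀ i, y i ≠ 0)
    (e : Fin n → ℕ) (he : ∀ i, 0 < e i) (κ : Fin n → ℤ)
    (hsupp : ∀ i, (y i).support ⊆ {q : ℚ | ∃ k : ℤ, q = (k : ℚ) / (e i : ℚ)})
    (horder : ∀ i, (y i).order = (κ i : ℚ) / (e i : ℚ))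
    (hfact : toHahnPoly (L := L) F =
      Polynomial.C (toHahnPoly (L := L) F).leadingCoeff *
        ∏ i, (Polynomial.X - Polynomial.C (y i)))
    (r : ℕ)
    (hr₁ : ∃ i j : ℕ, i + j = r ∧
      MvPolynomial.eval (0 : Fin 2 → K)
        ((fun P => MvPolynomial.pderiv (0 : Fin 2) P)^[i]
          ((fun P => MvPolynomial.pderiv (1 : Fin 2) P)^[j] F)) ≠ 0)
    (hr₂ : ∀ i j : ℕ, i + j < r →
      MvPolynomial.eval (0 : Fin 2 → K)
        ((fun P => MvPolynomial.pderiv (0 : Fin 2) P)^[i]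
          ((fun P => MvPolynomial.pderiv (1 : Fin 2) P)^[j] F)) = 0) :
    (r : ℚ) = ∑ i ∈ Finset.univ.filter (fun i => 0 < κ i),
      min 1 ((κ i : ℚ) / (e i : ℚ)) :=
  order_of_vanishing_eq_sum_general F n hF0 y hy e κ horder hfact r hr₁ hr₂
end
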